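/- (Exact version of Proposition 6: symmetry of the NIS redundancy.) Let (Ω, μ) be a probability space, S, U, V, U', V', T, W finite nonempty measurable spaces with measurable singletons, ψ : S ≃ U × V and ψ' : S ≃ U' × V' bijections (measurable with measurable inverses), and X : Ω → S, Y : Ω → T, Z : Ω → W measurable. Define A := (ψ ∘ X).1, B := (ψ ∘ X).2, A' := (ψ' ∘ X).1, B' := (ψ' ∘ X).2. Assume A is independent of ⟨B, Y, Z⟩ with H[B | Y] = 0, and A' is independent of ⟨B', Y, Z⟩ with H[B' | Z] = 0. Then the redundancy computed in either order coincides: H[X] − H[X|Y] − H[B|Z] = H[X] − H[X|Z] − H[B'|Y], and both sides equal the co-information H[X] − H[X|Y] − H[X|Z] + H[X|⟨Y,Z⟩]. -/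

import Mathlib

open MeasureTheory ProbabilityTheory Real

/-- Shannon entropy (natural logarithm) of a random variable `X : Ω → S`:
`H[X] = ∑ₓ -P(X = x) log P(X = x)`. -/
noncomputable def entropy {Ω S : Type*} [MeasurableSpace Ω] [MeasurableSpace S]
    (μ : Measure Ω) (X : Ω → S) : ℝ :=
  ∑' x : S, Real.negMulLog (μ (X ⁻¹' {x})).toReal

/-- Conditional Shannon entropy `H[X|Y] = ∑_y P(Y = y) · H[X ; μ conditioned on Y = y]`. -/
noncomputable def condEntropy {Ω S T : Type*} [MeasurableSpace Ω] [MeasurableSpace S]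
    [MeasurableSpace T] (μ : Measure Ω) (X : Ω → S) (Y : Ω → T) : ℝ :=
  ∑' y : T, (μ (Y ⁻¹' {y})).toReal * entropy (μ[|Y ⁻¹' {y}]) X

/-- Mutual information `I[X:Y] = H[X] + H[Y] − H[⟨X,Y⟩]`. -/
noncomputable def mutualInfo {Ω S T : Type*} [MeasurableSpace Ω] [MeasurableSpace S]
    [MeasurableSpace T] (μ : Measure Ω) (X : Ω → S) (Y : Ω → T) : ℝ :=
  entropy μ X + entropy μ Y - entropy μ (fun ω => (X ω, Y ω))

/-- Conditional mutual information
`I[X:Y|Z] = H[⟨X,Z⟩] + H[⟨Y,Z⟩] − H[⟨⟨X,Y⟩,Z⟩] − H[Z]`. -/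
noncomputable def condMutualInfo {Ω S T W : Type*} [MeasurableSpace Ω] [MeasurableSpace S]
    [MeasurableSpace T] [MeasurableSpace W] (μ : Measure Ω)
    (X : Ω → S) (Y : Ω → T) (Z : Ω → W) : ℝ :=
  entropy μ (fun ω => (X ω, Z ω)) + entropy μ (fun ω => (Y ω, Z ω))
    - entropy μ (fun ω => ((X ω, Y ω), Z ω)) - entropy μ Z

/-!
Splitting `X` through `ψ` as `(A, B)` with `A` independent of `⟨B, C⟩` gives
`H[X|C] = H[A] + H[B|C]` for every conditioning variable `C`; used with `C = Z` and `C = ⟨Y,Z⟩`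
it yields `H[X|Z] - H[B|Z] = H[A] = H[X|⟨Y,Z⟩] - H[B|⟨Y,Z⟩]`, and `H[B|⟨Y,Z⟩] = 0` because
already `H[B|Y] = 0`. Hence `H[B|Z] = H[X|Z] - H[X|⟨Y,Z⟩]`, and symmetrically, through `ψ'`,
`H[B'|Y] = H[X|Y] - H[X|⟨Y,Z⟩]`; both redundancies are then the co-information.
-/

lemma sum_sum_negMulLog_mul {ι κ : Type*} [Fintype ι] [Fintype κ] {p : ι → ℝ}
    {q : κ → ℝ} (hp : ∑ i, p i = 1) (hq : ∑ j, q j = 1) :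
    ∑ i, ∑ j, negMulLog (p i * q j) = ∑ i, negMulLog (p i) + ∑ j, negMulLog (q j) := by
  simp only [negMulLog_mul, Finset.sum_add_distrib, ← Finset.sum_mul, ← Finset.mul_sum, hq, hp,
    one_mul]

section Entropy

variable {Ω S T : Type*} [MeasurableSpace Ω] [MeasurableSpace S] [MeasurableSpace T]

lemma entropy_eq_sum [Fintype S] (μ : Measure Ω) (X : Ω → S) :
    entropy μ X = ∑ x, negMulLog (μ (X ⁻¹' {x})).toReal :=
  tsum_fintype _

@[simp]
lemma entropy_zero_measure (X : Ω → S) : entropy (0 : Measure Ω) X = 0 := by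
  simp [entropy]

lemma condEntropy_eq_sum [Fintype T] (μ : Measure Ω) (X : Ω → S) (Y : Ω → T) :
    condEntropy μ X Y = ∑ y, (μ (Y ⁻¹' {y})).toReal * entropy μ[|Y ⁻¹' {y}] X :=
  tsum_fintype _

lemma sum_toReal_measure_preimage_singleton [Fintype S] [MeasurableSingletonClass S]
    (μ : Measure Ω) [IsProbabilityMeasure μ] {X : Ω → S} (hX : Measurable X) :
    ∑ x, (μ (X ⁻¹' {x})).toReal = 1 := by
  rw [← ENNReal.toReal_sum fun x _ => measure_ne_top μ _,
    sum_measure_preimage_singleton _ fun x _ => hX (measurableSet_singleton x)]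
  simp

lemma entropy_comp_equiv {P : Type*} [MeasurableSpace P] (μ : Measure Ω) (X : Ω → S)
    (e : S ≃ P) : entropy μ (fun ω => e (X ω)) = entropy μ X := by
  have preimage_eq (p : P) : (fun ω => e (X ω)) ⁻¹' {p} = X ⁻¹' {e.symm p} := by
    ext ω
    simp [Equiv.eq_symm_apply]
  simp only [entropy, preimage_eq]
  exact e.symm.tsum_eq fun x => negMulLog (μ (X ⁻¹' {x})).toReal

lemma condEntropy_comp_equiv {P : Type*} [MeasurableSpace P] (μ : Measure Ω) (X : Ω → S)
    (Y : Ω → T) (e : S ≃ P) : condEntropy μ (fun ω => e (X ω)) Y = condEntropy μ X Y := by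
  simp only [condEntropy, entropy_comp_equiv]

lemma entropy_nonneg [Fintype S] (μ : Measure Ω) [IsZeroOrProbabilityMeasure μ] (X : Ω → S) :
    0 ≤ entropy μ X := by
  rw [entropy_eq_sum]
  exact Finset.sum_nonneg fun x _ => negMulLog_nonneg ENNReal.toReal_nonneg measureReal_le_one

lemma entropy_eq_zero_iff [Fintype S] [MeasurableSingletonClass S] (μ : Measure Ω)
    [IsProbabilityMeasure μ] {X : Ω → S} (hX : Measurable X) :
    entropy μ X = 0 ↔ ∃ v, ∀ᵐ ω ∂μ, X ω = v := by
  have ae_eq_iff (v : S) : (∀ᵐ ω ∂μ, X ω = v) ↔ μ (X ⁻¹' {v}) = 1 := by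
    rw [ae_iff, ← prob_compl_eq_zero_iff (hX (measurableSet_singleton v))]
    rfl
  simp only [ae_eq_iff]
  constructor
  · intro h
    rw [entropy_eq_sum, Finset.sum_eq_zero_iff_of_nonneg fun x _ =>
      negMulLog_nonneg ENNReal.toReal_nonneg measureReal_le_one] at h
    by_contra! hne
    -- every probability would be `0` or `1`, and none is `1`, yet they add up to `1`
    have hzero (x : S) : (μ (X ⁻¹' {x})).toReal = 0 := by
      have := h x (Finset.mem_univ x)
      simp only [negMulLog, neg_mul, neg_eq_zero, mul_eq_zero, log_eq_zero] at this
      rcases this with h0 | h0 | h1 | hneg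
      · exact h0
      · exact h0
      · exact absurd ((ENNReal.toReal_eq_one_iff _).mp h1) (hne x)
      · linarith [ENNReal.toReal_nonneg (a := μ (X ⁻¹' {x}))]
    simpa [hzero] using sum_toReal_measure_preimage_singleton μ hX
  · rintro ⟨v, hv⟩
    rw [entropy_eq_sum]
    refine Finset.sum_eq_zero fun x _ => ?_
    obtain rfl | hxv := eq_or_ne x v
    · simp [hv]
    · have hnull : μ (X ⁻¹' {x}) = 0 :=
        measure_mono_null (fun ω hω (h : X ω = v) => hxv (hω.symm.trans h))
          ((prob_compl_eq_zero_iff (hX (measurableSet_singleton v))).mpr hv)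
      simp [hnull]

lemma condEntropy_eq_zero_iff [Fintype S] [Fintype T] (μ : Measure Ω) (X : Ω → S)
    (Y : Ω → T) : condEntropy μ X Y = 0 ↔ ∀ y, entropy μ[|Y ⁻¹' {y}] X = 0 := by
  rw [condEntropy_eq_sum, Finset.sum_eq_zero_iff_of_nonneg fun y _ =>
    mul_nonneg ENNReal.toReal_nonneg (entropy_nonneg _ X)]
  refine forall_congr' fun y => ⟨fun h => ?_, fun h _ => by rw [h, mul_zero]⟩
  rcases mul_eq_zero.mp (h (Finset.mem_univ y)) with hy | hy
  · have hcond : μ[|Y ⁻¹' {y}] = 0 :=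
      cond_eq_zero.mpr ((ENNReal.toReal_eq_zero_iff _).mp hy).symm
    simp [hcond]
  · exact hy

lemma cond_absolutelyContinuous_cond_of_subset {s t : Set Ω} (μ : Measure Ω) [IsFiniteMeasure μ]
    (hs : MeasurableSet s) (ht : MeasurableSet t) (hst : s ⊆ t) : μ[|s] ≪ μ[|t] := by
  rw [← Set.inter_eq_right.mpr hst, ← cond_cond_eq_cond_inter ht hs]
  exact cond_absolutelyContinuous

lemma condEntropy_eq_zero_of_condEntropy_comp_eq_zero {T' : Type*} [MeasurableSpace T']
    [Fintype S] [MeasurableSingletonClass S] [Fintype T] [MeasurableSingletonClass T]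
    [Fintype T'] [MeasurableSingletonClass T'] (μ : Measure Ω) [IsFiniteMeasure μ]
    {X : Ω → S} {Y : Ω → T} (hX : Measurable X) (hY : Measurable Y) (g : T → T')
    (h : condEntropy μ X (fun ω => g (Y ω)) = 0) : condEntropy μ X Y = 0 := by
  rw [condEntropy_eq_zero_iff] at h ⊢
  intro y
  obtain hy | hy := eq_or_ne (μ (Y ⁻¹' {y})) 0
  · simp [cond_eq_zero_of_meas_eq_zero hy]
  have hsub : Y ⁻¹' {y} ⊆ (fun ω => g (Y ω)) ⁻¹' {g y} := fun ω (hω : Y ω = y) => by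
    simp [hω]
  have hgy : μ ((fun ω => g (Y ω)) ⁻¹' {g y}) ≠ 0 := fun h0 => hy (measure_mono_null hsub h0)
  have := cond_isProbabilityMeasure hy
  have := cond_isProbabilityMeasure hgy
  obtain ⟨v, hv⟩ := (entropy_eq_zero_iff _ hX).mp (h (g y))
  refine (entropy_eq_zero_iff _ hX).mpr ⟨v, ?_⟩
  exact cond_absolutelyContinuous_cond_of_subset μ (hY (measurableSet_singleton y))
    ((measurable_of_countable g).comp hY (measurableSet_singleton (g y))) hsub |>.ae_le hv

end Entropy

section Independence

variable {Ω S U V W : Type*} [MeasurableSpace Ω] [MeasurableSpace S] [MeasurableSpace U]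
  [MeasurableSpace V] [MeasurableSpace W] [MeasurableSingletonClass U]
  [MeasurableSingletonClass V] [MeasurableSingletonClass W]
  (μ : Measure Ω) {A : Ω → U} {B : Ω → V} {Z : Ω → W}

lemma cond_preimage_prod_eq_mul (hZ : Measurable Z) (hind : IndepFun A (fun ω => (B ω, Z ω)) μ)
    (a : U) (b : V) (z : W) :
    μ[|Z ⁻¹' {z}] ((fun ω => (A ω, B ω)) ⁻¹' {(a, b)}) =
      μ (A ⁻¹' {a}) * μ[|Z ⁻¹' {z}] (B ⁻¹' {b}) := by
  have h_ab : Z ⁻¹' {z} ∩ (fun ω => (A ω, B ω)) ⁻¹' {(a, b)} =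
      A ⁻¹' {a} ∩ (fun ω => (B ω, Z ω)) ⁻¹' {(b, z)} := by
    ext ω
    simp only [Set.mem_inter_iff, Set.mem_preimage, Set.mem_singleton_iff, Prod.mk.injEq]
    tauto
  have h_b : Z ⁻¹' {z} ∩ B ⁻¹' {b} = (fun ω => (B ω, Z ω)) ⁻¹' {(b, z)} := by
    ext ω
    simp only [Set.mem_inter_iff, Set.mem_preimage, Set.mem_singleton_iff, Prod.mk.injEq]
    tauto
  rw [cond_apply (hZ (measurableSet_singleton z)), cond_apply (hZ (measurableSet_singleton z)),
    h_ab, h_b, hind.measure_inter_preimage_eq_mul _ _ (measurableSet_singleton a)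
      (measurableSet_singleton _), mul_left_comm]

variable [Fintype U] [Fintype V] [IsProbabilityMeasure μ]

lemma entropy_cond_prod_of_indepFun (hA : Measurable A) (hB : Measurable B) (hZ : Measurable Z)
    (hind : IndepFun A (fun ω => (B ω, Z ω)) μ) {z : W} (hz : μ (Z ⁻¹' {z}) ≠ 0) :
    entropy μ[|Z ⁻¹' {z}] (fun ω => (A ω, B ω)) = entropy μ A + entropy μ[|Z ⁻¹' {z}] B := by
  have := cond_isProbabilityMeasure hz
  simp only [entropy_eq_sum, Fintype.sum_prod_type, cond_preimage_prod_eq_mul μ hZ hind,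
    ENNReal.toReal_mul]
  exact sum_sum_negMulLog_mul (sum_toReal_measure_preimage_singleton μ hA)
    (sum_toReal_measure_preimage_singleton _ hB)

lemma condEntropy_prod_of_indepFun [Fintype W] (hA : Measurable A) (hB : Measurable B)
    (hZ : Measurable Z) (hind : IndepFun A (fun ω => (B ω, Z ω)) μ) :
    condEntropy μ (fun ω => (A ω, B ω)) Z = entropy μ A + condEntropy μ B Z := by
  have hterm (z : W) : (μ (Z ⁻¹' {z})).toReal * entropy μ[|Z ⁻¹' {z}] (fun ω => (A ω, B ω)) =
      (μ (Z ⁻¹' {z})).toReal * entropy μ A +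
        (μ (Z ⁻¹' {z})).toReal * entropy μ[|Z ⁻¹' {z}] B := by
    obtain hz | hz := eq_or_ne (μ (Z ⁻¹' {z})) 0
    · simp [hz]
    · rw [entropy_cond_prod_of_indepFun μ hA hB hZ hind hz, mul_add]
  simp only [condEntropy_eq_sum, hterm, Finset.sum_add_distrib, ← Finset.sum_mul,
    sum_toReal_measure_preimage_singleton μ hZ, one_mul]

lemma condEntropy_eq_entropy_add_condEntropy_of_indepFun [Fintype W] (e : S ≃ U × V)
    (he : Measurable e) {X : Ω → S} (hX : Measurable X) (hZ : Measurable Z)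
    (hind : IndepFun (fun ω => (e (X ω)).1) (fun ω => ((e (X ω)).2, Z ω)) μ) :
    condEntropy μ X Z =
      entropy μ (fun ω => (e (X ω)).1) + condEntropy μ (fun ω => (e (X ω)).2) Z := by
  rw [← condEntropy_comp_equiv μ X Z e]
  exact condEntropy_prod_of_indepFun μ (measurable_fst.comp (he.comp hX))
    (measurable_snd.comp (he.comp hX)) hZ hind

end Independence

theorem nis_redundancy_symmetry_general {Ω S U V U' V' T W : Type*} [MeasurableSpace Ω]
    [MeasurableSpace S]
    [Fintype U] [MeasurableSpace U] [MeasurableSingletonClass U]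
    [Fintype V] [MeasurableSpace V] [MeasurableSingletonClass V]
    [Fintype U'] [MeasurableSpace U'] [MeasurableSingletonClass U']
    [Fintype V'] [MeasurableSpace V'] [MeasurableSingletonClass V']
    [Fintype T] [MeasurableSpace T] [MeasurableSingletonClass T]
    [Fintype W] [MeasurableSpace W] [MeasurableSingletonClass W]
    (μ : Measure Ω) [IsProbabilityMeasure μ]
    (ψ : S ≃ U × V) (hψ : Measurable ψ)
    (ψ' : S ≃ U' × V') (hψ' : Measurable ψ')
    (X : Ω → S) (Y : Ω → T) (Z : Ω → W)
    (hX : Measurable X) (hY : Measurable Y) (hZ : Measurable Z)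
    (A : Ω → U) (B : Ω → V) (A' : Ω → U') (B' : Ω → V')
    (hA : A = fun ω => (ψ (X ω)).1) (hB : B = fun ω => (ψ (X ω)).2)
    (hA' : A' = fun ω => (ψ' (X ω)).1) (hB' : B' = fun ω => (ψ' (X ω)).2)
    (hindep : IndepFun A (fun ω => (B ω, Y ω, Z ω)) μ)
    (hBY : condEntropy μ B Y = 0)
    (hindep' : IndepFun A' (fun ω => (B' ω, Y ω, Z ω)) μ)
    (hB'Z : condEntropy μ B' Z = 0) :
    entropy μ X - condEntropy μ X Y - condEntropy μ B Z =
      entropy μ X - condEntropy μ X Z - condEntropy μ B' Y ∧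
    entropy μ X - condEntropy μ X Y - condEntropy μ B Z =
      entropy μ X - condEntropy μ X Y - condEntropy μ X Z +
        condEntropy μ X (fun ω => (Y ω, Z ω)) := by
  subst hA hB hA' hB'
  have hYZ : Measurable fun ω => (Y ω, Z ω) := hY.prodMk hZ
  have hXZ := condEntropy_eq_entropy_add_condEntropy_of_indepFun μ ψ hψ hX hZ
    (hindep.comp measurable_id (measurable_fst.prodMk (measurable_snd.comp measurable_snd)))
  have hXYZ := condEntropy_eq_entropy_add_condEntropy_of_indepFun μ ψ hψ hX hYZ hindep
  have hXY := condEntropy_eq_entropy_add_condEntropy_of_indepFun μ ψ' hψ' hX hY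
    (hindep'.comp measurable_id (measurable_fst.prodMk (measurable_fst.comp measurable_snd)))
  have hXYZ' := condEntropy_eq_entropy_add_condEntropy_of_indepFun μ ψ' hψ' hX hYZ hindep'
  have hBYZ := condEntropy_eq_zero_of_condEntropy_comp_eq_zero μ
    (X := fun ω => (ψ (X ω)).2) (hψ.comp hX).snd hYZ Prod.fst hBY
  have hB'YZ := condEntropy_eq_zero_of_condEntropy_comp_eq_zero μ
    (X := fun ω => (ψ' (X ω)).2) (hψ'.comp hX).snd hYZ Prod.snd hB'Z
  constructor <;> linarith

/-- exact symmetry of the NIS redundancy: with two encoders `ψ`, `ψ'`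
splitting `X` into `(A,B)` and `(A',B')` respectively, where `A ⊥ ⟨B,Y,Z⟩`, `H[B|Y] = 0`,
`A' ⊥ ⟨B',Y,Z⟩`, `H[B'|Z] = 0`, the redundancies computed in either order coincide:
`H[X] − H[X|Y] − H[B|Z] = H[X] − H[X|Z] − H[B'|Y]`, and both equal the co-information
`H[X] − H[X|Y] − H[X|Z] + H[X|⟨Y,Z⟩]`. -/
theorem nis_redundancy_symmetry {Ω S U V U' V' T W : Type*} [MeasurableSpace Ω]
    [Fintype S] [Nonempty S] [MeasurableSpace S] [MeasurableSingletonClass S]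
    [Fintype U] [Nonempty U] [MeasurableSpace U] [MeasurableSingletonClass U]
    [Fintype V] [Nonempty V] [MeasurableSpace V] [MeasurableSingletonClass V]
    [Fintype U'] [Nonempty U'] [MeasurableSpace U'] [MeasurableSingletonClass U']
    [Fintype V'] [Nonempty V'] [MeasurableSpace V'] [MeasurableSingletonClass V']
    [Fintype T] [Nonempty T] [MeasurableSpace T] [MeasurableSingletonClass T]
    [Fintype W] [Nonempty W] [MeasurableSpace W] [MeasurableSingletonClass W]
    (μ : Measure Ω) [IsProbabilityMeasure μ]
    (ψ : S ≃ U × V) (hψ : Measurable ψ) (hψsymm : Measurable ψ.symm)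
    (ψ' : S ≃ U' × V') (hψ' : Measurable ψ') (hψ'symm : Measurable ψ'.symm)
    (X : Ω → S) (Y : Ω → T) (Z : Ω → W)
    (hX : Measurable X) (hY : Measurable Y) (hZ : Measurable Z)
    (A : Ω → U) (B : Ω → V) (A' : Ω → U') (B' : Ω → V')
    (hA : A = fun ω => (ψ (X ω)).1) (hB : B = fun ω => (ψ (X ω)).2)
    (hA' : A' = fun ω => (ψ' (X ω)).1) (hB' : B' = fun ω => (ψ' (X ω)).2)
    (hindep : IndepFun A (fun ω => (B ω, Y ω, Z ω)) μ)
    (hBY : condEntropy μ B Y = 0)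
    (hindep' : IndepFun A' (fun ω => (B' ω, Y ω, Z ω)) μ)
    (hB'Z : condEntropy μ B' Z = 0) :
    entropy μ X - condEntropy μ X Y - condEntropy μ B Z =
      entropy μ X - condEntropy μ X Z - condEntropy μ B' Y ∧
    entropy μ X - condEntropy μ X Y - condEntropy μ B Z =
      entropy μ X - condEntropy μ X Y - condEntropy μ X Z +
        condEntropy μ X (fun ω => (Y ω, Z ω)) :=
  nis_redundancy_symmetry_general μ ψ hψ ψ' hψ' X Y Z hX hY hZ A B A' B' hA hB hA' hB' hindep hBY
    hindep' hB'Z
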